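/- Let b ≥ 2 be an integer. The function h(w) := 1/(e^w − 1) − b/(e^{wb} − 1), defined for w > 0, is strictly decreasing on (0, ∞), tends to (b−1)/2 as w → 0⁺, and tends to 0 as w → ∞; in particular, for every real μ with 0 < μ < 1 there exists a unique w > 0 with h(w) = μ(b−1)/2. -/

import Mathlib

/-!
Since `eˣ / (eˣ - 1)² = 1 / (4 sinh² (x / 2))`, the derivative of `h` is negative exactly when
`b sinh (w / 2) < sinh (b w / 2)`, and `sinh (c s) - c sinh s` vanishes at `0` and has derivative
`c (cosh (c s) - cosh s) > 0` for `c > 1`, `s > 0`. Near `0`, geometric sums in `x = eʷ` turn `h`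
into `(∑_{j<b} ∑_{i<j} xⁱ) / ∑_{i<b} xⁱ`, which is continuous at `x = 1` with value
`(∑_{j<b} j) / b = (b - 1) / 2`. The equation `h w = μ (b - 1) / 2` is then solved by the
intermediate value theorem, uniquely by monotonicity.
-/

open Real Filter Set Topology

namespace Real

lemma mul_sinh_lt_sinh_mul {c t : ℝ} (hc : 1 < c) (ht : 0 < t) : c * sinh t < sinh (c * t) := by
  let F : ℝ → ℝ := fun s => sinh (c * s) - c * sinh s
  have hF : ∀ s, HasDerivAt F (c * (cosh (c * s) - cosh s)) s := fun s => by
    have := (((hasDerivAt_id' s).const_mul c).sinh).sub ((hasDerivAt_sinh s).const_mul c)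
    exact this.congr_deriv (by ring)
  have hmono : StrictMonoOn F (Ici 0) := by
    refine strictMonoOn_of_deriv_pos (convex_Ici 0)
      (fun s _ => (hF s).continuousAt.continuousWithinAt) fun s hs => ?_
    rw [interior_Ici, Set.mem_Ioi] at hs
    have : cosh s < cosh (c * s) := by
      rw [cosh_lt_cosh, abs_of_pos hs, abs_of_pos (by positivity)]
      exact lt_mul_of_one_lt_left hs hc
    rw [(hF s).deriv]
    exact mul_pos (by linarith) (sub_pos.2 this)
  simpa [F] using hmono self_mem_Ici ht.le ht

lemma exp_div_exp_sub_one_sq (x : ℝ) : exp x / (exp x - 1) ^ 2 = (4 * sinh (x / 2) ^ 2)⁻¹ := by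
  have hhalf : exp x = exp (x / 2) ^ 2 := by rw [← exp_nat_mul]; ring_nf
  have hsub : exp x - 1 = 2 * exp (x / 2) * sinh (x / 2) := by
    rw [sinh_eq, hhalf, exp_neg]; field_simp
  rw [hsub, hhalf]
  field_simp
  norm_num

lemma hasDerivAt_inv_exp_sub_one {x : ℝ} (hx : x ≠ 0) :
    HasDerivAt (fun x => (exp x - 1)⁻¹) (-(exp x / (exp x - 1) ^ 2)) x :=
  (((hasDerivAt_exp x).sub_const 1).inv (sub_ne_zero.2 (exp_eq_one_iff x |>.not.2 hx))).congr_deriv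
    (neg_div _ _)

end Real

noncomputable def saddlePointFun (c w : ℝ) : ℝ := 1 / (exp w - 1) - c / (exp (w * c) - 1)

lemma saddlePointFun_eq (c : ℝ) :
    saddlePointFun c = fun w => (exp w - 1)⁻¹ - c * (exp (w * c) - 1)⁻¹ := by
  funext w; simp only [saddlePointFun, div_eq_mul_inv, one_mul]

lemma hasDerivAt_saddlePointFun {c w : ℝ} (hc : c ≠ 0) (hw : w ≠ 0) :
    HasDerivAt (saddlePointFun c)
      (-(exp w / (exp w - 1) ^ 2) + c ^ 2 * (exp (w * c) / (exp (w * c) - 1) ^ 2)) w := by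
  have hinner := (hasDerivAt_inv_exp_sub_one (mul_ne_zero hw hc)).comp w
    ((hasDerivAt_id' w).mul_const c)
  rw [saddlePointFun_eq]
  exact ((hasDerivAt_inv_exp_sub_one hw).sub (hinner.const_mul c)).congr_deriv (by ring)

lemma sq_mul_exp_mul_div_lt {c w : ℝ} (hc : 1 < c) (hw : 0 < w) :
    c ^ 2 * (exp (w * c) / (exp (w * c) - 1) ^ 2) < exp w / (exp w - 1) ^ 2 := by
  have hs : 0 < sinh (w / 2) := sinh_pos_iff.2 (half_pos hw)
  have hsinh : sinh (w / 2) < sinh (w * c / 2) / c := by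
    rw [lt_div_iff₀ (by positivity), mul_comm, show w * c / 2 = c * (w / 2) by ring]
    exact mul_sinh_lt_sinh_mul hc (half_pos hw)
  rw [exp_div_exp_sub_one_sq, exp_div_exp_sub_one_sq]
  calc c ^ 2 * (4 * sinh (w * c / 2) ^ 2)⁻¹ = (4 * (sinh (w * c / 2) / c) ^ 2)⁻¹ := by
        field_simp
    _ < (4 * sinh (w / 2) ^ 2)⁻¹ := by gcongr

lemma continuousOn_saddlePointFun {c : ℝ} (hc : c ≠ 0) : ContinuousOn (saddlePointFun c) {0}ᶜ :=
  fun _ hw => (hasDerivAt_saddlePointFun hc hw).continuousAt.continuousWithinAt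

lemma strictAntiOn_saddlePointFun {c : ℝ} (hc : 1 < c) :
    StrictAntiOn (saddlePointFun c) (Ioi 0) := by
  have hc0 : c ≠ 0 := by positivity
  refine strictAntiOn_of_deriv_neg (convex_Ioi 0)
    ((continuousOn_saddlePointFun hc0).mono fun _ hw => ne_of_gt hw) fun w hw => ?_
  rw [interior_Ioi] at hw
  rw [(hasDerivAt_saddlePointFun hc0 hw.ne').deriv]
  linarith [sq_mul_exp_mul_div_lt hc hw]

lemma tendsto_saddlePointFun_atTop {c : ℝ} (hc : 0 < c) :
    Tendsto (saddlePointFun c) atTop (𝓝 0) := by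
  have hinv : Tendsto (fun w => (exp w - 1)⁻¹) atTop (𝓝 0) := by
    have : Tendsto (fun w => exp w - 1) atTop atTop := by
      simpa only [sub_eq_add_neg] using tendsto_atTop_add_const_right _ (-1) tendsto_exp_atTop
    exact tendsto_inv_atTop_zero.comp this
  rw [saddlePointFun_eq]
  simpa using hinv.sub ((hinv.comp (tendsto_id.atTop_mul_const hc)).const_mul c)

lemma one_div_sub_one_sub_div_pow_sub_one {K : Type*} [Field K] (b : ℕ) {x : K} (hx : x ≠ 1)
    (hq : ∑ i ∈ Finset.range b, x ^ i ≠ 0) :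
    1 / (x - 1) - b / (x ^ b - 1) =
      (∑ j ∈ Finset.range b, ∑ i ∈ Finset.range j, x ^ i) / ∑ i ∈ Finset.range b, x ^ i := by
  have hx1 : x - 1 ≠ 0 := sub_ne_zero.2 hx
  have hP : (∑ j ∈ Finset.range b, ∑ i ∈ Finset.range j, x ^ i) * (x - 1) =
      ∑ i ∈ Finset.range b, x ^ i - b := by
    rw [Finset.sum_mul]
    simp only [geom_sum_mul, Finset.sum_sub_distrib, Finset.sum_const, Finset.card_range,
      nsmul_eq_mul, mul_one]
  rw [← geom_sum_mul, div_sub_div _ _ hx1 (mul_ne_zero hq hx1), div_eq_div_iff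
    (mul_ne_zero hx1 (mul_ne_zero hq hx1)) hq]
  linear_combination (-(x - 1) * (∑ i ∈ Finset.range b, x ^ i)) * hP

lemma tendsto_saddlePointFun_natCast_nhdsNE_zero {b : ℕ} (hb : b ≠ 0) :
    Tendsto (saddlePointFun b) (𝓝[≠] 0) (𝓝 (((b : ℝ) - 1) / 2)) := by
  set P : ℝ → ℝ := fun x => ∑ j ∈ Finset.range b, ∑ i ∈ Finset.range j, x ^ i
  set Q : ℝ → ℝ := fun x => ∑ i ∈ Finset.range b, x ^ i
  have hQ : ∀ w, Q (exp w) ≠ 0 := fun w =>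
    (Finset.sum_pos (fun i _ => by positivity) (Finset.nonempty_range_iff.2 hb)).ne'
  have hval : P (exp 0) / Q (exp 0) = ((b : ℝ) - 1) / 2 := by
    have := congrArg (Nat.cast : ℕ → ℝ) (Finset.sum_range_id_mul_two b)
    push_cast [Nat.cast_sub (Nat.one_le_iff_ne_zero.2 hb)] at this
    simp only [P, Q, exp_zero, one_pow, Finset.sum_const, Finset.card_range, nsmul_eq_mul, mul_one]
    field_simp
    linarith
  have hcont : ContinuousAt (fun w => P (exp w) / Q (exp w)) 0 :=
    ContinuousAt.div (by fun_prop) (by fun_prop) (hQ 0)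
  rw [← hval]
  refine (hcont.tendsto.mono_left nhdsWithin_le_nhds).congr' ?_
  filter_upwards [self_mem_nhdsWithin] with w hw
  rw [saddlePointFun, exp_mul, rpow_natCast]
  exact (one_div_sub_one_sub_div_pow_sub_one b (exp_eq_one_iff w |>.not.2 hw) (hQ w)).symm

lemma StrictAntiOn.existsUnique_eq_of_tendsto {f : ℝ → ℝ} {a l m y : ℝ}
    (hf : StrictAntiOn f (Ioi a)) (hcont : ContinuousOn f (Ioi a))
    (hl : Tendsto f (𝓝[>] a) (𝓝 l)) (hm : Tendsto f atTop (𝓝 m)) (hy : y ∈ Ioo m l) :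
    ∃! x, a < x ∧ f x = y := by
  obtain ⟨x, hyx, hax⟩ := ((hl.eventually_const_lt hy.2).and self_mem_nhdsWithin).exists
  obtain ⟨z, hzy, hxz⟩ := ((hm.eventually_lt_const hy.1).and (eventually_gt_atTop x)).exists
  have hsub : Icc x z ⊆ Ioi a := fun t ht => lt_of_lt_of_le hax ht.1
  obtain ⟨w, hw, hwy⟩ :=
    intermediate_value_Icc' hxz.le (hcont.mono hsub) ⟨hzy.le, hyx.le⟩
  exact ⟨w, ⟨hsub hw, hwy⟩, fun v hv => hf.injOn hv.1 (hsub hw) (hv.2.trans hwy.symm)⟩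

/-- properties of `h(w) = 1/(e^w-1) - b/(e^{wb}-1)` on `(0,∞)`:
strictly decreasing, limit `(b-1)/2` at `0⁺`, limit `0` at `∞`, and for each
`0 < μ < 1` a unique `w > 0` with `h(w) = μ(b-1)/2`. -/
theorem saddle_point_function_decreasing
    (b : ℕ) (hb : 2 ≤ b) (h : ℝ → ℝ)
    (hh : ∀ w : ℝ, h w =
      1 / (Real.exp w - 1) - (b : ℝ) / (Real.exp (w * (b : ℝ)) - 1)) :
    StrictAntiOn h (Set.Ioi 0) ∧
      Filter.Tendsto h (nhdsWithin 0 (Set.Ioi 0)) (nhds (((b : ℝ) - 1) / 2)) ∧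
      Filter.Tendsto h Filter.atTop (nhds 0) ∧
      ∀ μ : ℝ, 0 < μ → μ < 1 →
        ∃! w : ℝ, 0 < w ∧ h w = μ * ((b : ℝ) - 1) / 2 := by
  obtain rfl : h = saddlePointFun b := funext hh
  have hb1 : (1 : ℝ) < b := by exact_mod_cast hb
  have hanti := strictAntiOn_saddlePointFun hb1
  have hzero := (tendsto_saddlePointFun_natCast_nhdsNE_zero (b := b) (by omega)).mono_left
    (nhdsGT_le_nhdsNE 0)
  have htop := tendsto_saddlePointFun_atTop (zero_lt_one.trans hb1)
  refine ⟨hanti, hzero, htop, fun μ hμ0 hμ1 => ?_⟩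
  exact hanti.existsUnique_eq_of_tendsto
    ((continuousOn_saddlePointFun (by positivity)).mono fun _ hw => ne_of_gt hw) hzero htop ⟨by nlinarith, by nlinarith⟩
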